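/- Let n ≥ 1, k > 0, ω_f > 0, c̃ ≥ 0, α ∈ [0,1], let h₁ ∈ ℝⁿ be nonzero with ĥ₁ := h₁/‖h₁‖, let H be a symmetric positive definite real n×n matrix, and set M := k(Iₙ − α ĥ₁ ĥ₁ᵀ). Assume additionally that if α = 1 then c̃ > 0. Then every complex eigenvalue of Z := ω_f M H + ω_f c̃ h₁ h₁ᵀ is real and strictly positive. -/

import Mathlib

set_option linter.unusedSectionVars false
set_option maxHeartbeats 1000000

noncomputable section
open Matrix Polynomial

section Helpers

variable {m : Type} [Fintype m] [DecidableEq m]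

/-- Coercion of a real vector to a complex vector. -/
def cv (v : m → ℝ) : m → ℂ := fun i => (v i : ℂ)

lemma star_cv (v : m → ℝ) : star (cv v) = cv v := by
  funext i; simp [cv]

lemma cv_dot (v w : m → ℝ) : cv v ⬝ᵥ cv w = ((v ⬝ᵥ w : ℝ) : ℂ) := by
  simp [cv, dotProduct]

lemma star_dot_cv (x : m → ℂ) (v : m → ℝ) :
    star x ⬝ᵥ cv v = (starRingEnd ℂ) (cv v ⬝ᵥ x) := by
  simp only [dotProduct, map_sum, _root_.map_mul, cv, Complex.conj_ofReal, Pi.star_apply]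
  exact Finset.sum_congr rfl fun i _ => by rw [Complex.star_def]; ring

lemma map_mulVec_cv (A : Matrix m m ℝ) (v : m → ℝ) :
    (A.map (algebraMap ℝ ℂ)) *ᵥ (cv v) = cv (A *ᵥ v) := by
  funext i
  simp [Matrix.mulVec, cv, dotProduct, Matrix.map_apply]

lemma vecMulVec_mulVec' (u v x : m → ℂ) :
    Matrix.vecMulVec u v *ᵥ x = (v ⬝ᵥ x) • u := by
  funext i
  simp only [Matrix.mulVec, Matrix.vecMulVec_apply, dotProduct, Pi.smul_apply, smul_eq_mul,
    Finset.sum_mul]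
  exact Finset.sum_congr rfl fun j _ => by ring

lemma vecMulVec_mul_vecMulVec (u v w z : m → ℂ) :
    Matrix.vecMulVec u v * Matrix.vecMulVec w z = (v ⬝ᵥ w) • Matrix.vecMulVec u z := by
  ext i j
  simp only [Matrix.mul_apply, Matrix.vecMulVec_apply, Matrix.smul_apply, dotProduct,
    smul_eq_mul, Finset.sum_mul]
  exact Finset.sum_congr rfl fun l _ => by ring

lemma dot_star_self (x : m → ℂ) :
    star x ⬝ᵥ x = ((∑ i, Complex.normSq (x i) : ℝ) : ℂ) := by
  push_cast
  simp only [dotProduct, Pi.star_apply]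
  exact Finset.sum_congr rfl fun i _ => by
    rw [Complex.star_def, ← Complex.normSq_eq_conj_mul_self]

lemma sum_normSq_pos {x : m → ℂ} (hx : x ≠ 0) : 0 < ∑ i, Complex.normSq (x i) := by
  obtain ⟨i₀, hi₀⟩ := Function.ne_iff.mp hx
  exact Finset.sum_pos' (fun i _ => Complex.normSq_nonneg _)
    ⟨i₀, Finset.mem_univ _, Complex.normSq_pos.mpr hi₀⟩

lemma sum_normSq_zero {x : m → ℂ} (hx : ∑ i, Complex.normSq (x i) = 0) : x = 0 := by
  by_contra h
  exact absurd hx (ne_of_gt (sum_normSq_pos h))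

lemma herm_map {A : Matrix m m ℝ} (hA : Aᵀ = A) :
    (A.map (algebraMap ℝ ℂ))ᴴ = A.map (algebraMap ℝ ℂ) := by
  ext i j
  simp only [conjTranspose_apply, Matrix.map_apply, Complex.coe_algebraMap, Complex.star_def,
    Complex.conj_ofReal]
  exact congrArg _ (congrFun (congrFun hA i) j)

lemma symm_swap {A : Matrix m m ℝ} (hA : Aᵀ = A) (x y : m → ℂ) :
    star x ⬝ᵥ ((A.map (algebraMap ℝ ℂ)) *ᵥ y) = star ((A.map (algebraMap ℝ ℂ)) *ᵥ x) ⬝ᵥ y := by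
  rw [star_mulVec, herm_map hA, ← dotProduct_mulVec]

lemma posdef_symm {A : Matrix m m ℝ} (hA : A.PosDef) : Aᵀ = A := by
  have := hA.1
  rwa [Matrix.IsHermitian, conjTranspose_eq_transpose_of_trivial] at this

lemma dot_symm {A : Matrix m m ℝ} (hA : Aᵀ = A) (v w : m → ℝ) :
    v ⬝ᵥ A *ᵥ w = w ⬝ᵥ A *ᵥ v := by
  rw [dotProduct_mulVec, ← mulVec_transpose, hA, dotProduct_comm]

lemma star_real (v : m → ℝ) : star v = v := by
  funext i; exact star_trivial _

lemma x_decomp (x : m → ℂ) :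
    x = cv (fun i => (x i).re) + Complex.I • cv (fun i => (x i).im) ∧
    star x = cv (fun i => (x i).re) - Complex.I • cv (fun i => (x i).im) := by
  constructor <;> (funext i; apply Complex.ext <;> simp [cv])

lemma qpos_aux {A : Matrix m m ℝ} (hA : A.PosDef) (a b : m → ℝ) (hab : ¬(a = 0 ∧ b = 0)) :
    ∃ q : ℝ,
      (cv a - Complex.I • cv b) ⬝ᵥ ((A.map (algebraMap ℝ ℂ)) *ᵥ (cv a + Complex.I • cv b))
        = (q : ℂ) ∧ 0 < q := by
  refine ⟨a ⬝ᵥ A *ᵥ a + b ⬝ᵥ A *ᵥ b, ?_, ?_⟩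
  · rw [mulVec_add, mulVec_smul, map_mulVec_cv, map_mulVec_cv,
      sub_dotProduct, smul_dotProduct, dotProduct_add, dotProduct_add,
      dotProduct_smul, dotProduct_smul, cv_dot, cv_dot, cv_dot, cv_dot,
      dot_symm (posdef_symm hA) b a]
    push_cast
    simp only [smul_eq_mul]
    linear_combination (-((b ⬝ᵥ A *ᵥ b : ℝ) : ℂ)) * Complex.I_sq
  · have hpos : ∀ v : m → ℝ, v ≠ 0 → 0 < v ⬝ᵥ A *ᵥ v := by
      intro v hv
      have := hA.dotProduct_mulVec_pos hv
      rwa [star_real] at this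
    have hnn : ∀ v : m → ℝ, 0 ≤ v ⬝ᵥ A *ᵥ v := by
      intro v
      have := hA.posSemidef.dotProduct_mulVec_nonneg v
      rwa [star_real] at this
    rcases not_and_or.mp hab with h | h
    · have := hpos a h; have := hnn b; linarith
    · have := hpos b h; have := hnn a; linarith

lemma qpos {A : Matrix m m ℝ} (hA : A.PosDef) (x : m → ℂ) (hx : x ≠ 0) :
    ∃ q : ℝ, star x ⬝ᵥ (A.map (algebraMap ℝ ℂ)) *ᵥ x = (q : ℂ) ∧ 0 < q := by
  obtain ⟨hx1, hx2⟩ := x_decomp x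
  have hab : ¬((fun i => (x i).re) = 0 ∧ (fun i => (x i).im) = 0) := by
    rintro ⟨h1, h2⟩
    apply hx
    funext i
    have e1 := congrFun h1 i
    have e2 := congrFun h2 i
    simp only [Pi.zero_apply] at e1 e2
    apply Complex.ext <;> simpa
  obtain ⟨q, hq, hqpos⟩ := qpos_aux hA _ _ hab
  refine ⟨q, ?_, hqpos⟩
  rw [hx2]
  nth_rewrite 3 [hx1]
  exact hq

lemma real_ratio {μ : ℂ} {a b : ℝ} (h : μ * (b : ℂ) = (a : ℂ)) (hb : 0 < b) (ha : 0 < a) :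
    μ.im = 0 ∧ 0 < μ.re := by
  have hbne : (b : ℂ) ≠ 0 := by exact_mod_cast ne_of_gt hb
  have hμ : μ = ((a / b : ℝ) : ℂ) := by
    push_cast
    field_simp
    linear_combination h
  rw [hμ]
  exact ⟨by simp, by simp only [Complex.ofReal_re]; positivity⟩

-- complex matrix map lemmas
lemma cmap_add (A B : Matrix m m ℝ) :
    (A + B).map (algebraMap ℝ ℂ) = A.map (algebraMap ℝ ℂ) + B.map (algebraMap ℝ ℂ) := by
  ext i j; simp

lemma cmap_sub (A B : Matrix m m ℝ) :
    (A - B).map (algebraMap ℝ ℂ) = A.map (algebraMap ℝ ℂ) - B.map (algebraMap ℝ ℂ) := by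
  ext i j; simp

lemma cmap_smul (r : ℝ) (A : Matrix m m ℝ) :
    (r • A).map (algebraMap ℝ ℂ) = ((r : ℝ) : ℂ) • A.map (algebraMap ℝ ℂ) := by
  ext i j; simp

lemma cmap_mul (A B : Matrix m m ℝ) :
    (A * B).map (algebraMap ℝ ℂ) = A.map (algebraMap ℝ ℂ) * B.map (algebraMap ℝ ℂ) := by
  ext i j
  simp only [Matrix.map_apply, Matrix.mul_apply, Complex.coe_algebraMap]
  push_cast
  rfl

lemma cmap_one : ((1 : Matrix m m ℝ)).map (algebraMap ℝ ℂ) = 1 := by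
  ext i j
  by_cases h : i = j <;> simp [Matrix.one_apply, h]

lemma cmap_vecMulVec (v w : m → ℝ) :
    (Matrix.vecMulVec v w).map (algebraMap ℝ ℂ) = Matrix.vecMulVec (cv v) (cv w) := by
  ext i j; simp [Matrix.vecMulVec_apply, cv]

end Helpers

/-- `μ ∈ ℂ` is an eigenvalue of the real matrix `A`, i.e. a root of its
characteristic polynomial over `ℂ`. -/
def IsEig {m : Type} [Fintype m] [DecidableEq m] (A : Matrix m m ℝ) (μ : ℂ) : Prop :=
  ((A.charpoly).map (algebraMap ℝ ℂ)).IsRoot μ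

lemma exists_eigvec {m : Type} [Fintype m] [DecidableEq m] {A : Matrix m m ℝ} {μ : ℂ}
    (h : IsEig A μ) :
    ∃ x : m → ℂ, x ≠ 0 ∧ (A.map (algebraMap ℝ ℂ)) *ᵥ x = μ • x := by
  set B := A.map (algebraMap ℝ ℂ) with hB
  have h1 : B.charpoly.IsRoot μ := by
    rw [hB, Matrix.charpoly_map]; exact h
  have h3 : (μ • (1 : Matrix m m ℂ) - B) = (charmatrix B).map (Polynomial.evalRingHom μ) := by
    ext i j
    by_cases hij : i = j
    · subst hij
      simp [charmatrix_apply_eq, Matrix.one_apply_eq]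
    · simp [charmatrix_apply_ne _ _ _ hij, Matrix.one_apply_ne hij]
  have hdet : (μ • (1 : Matrix m m ℂ) - B).det = 0 := by
    rw [h3, ← RingHom.mapMatrix_apply, ← RingHom.map_det]
    simpa [Matrix.charpoly] using h1
  obtain ⟨v, hv0, hv⟩ := (Matrix.exists_mulVec_eq_zero_iff).mpr hdet
  refine ⟨v, hv0, ?_⟩
  rw [sub_mulVec, smul_mulVec, one_mulVec, sub_eq_zero] at hv
  rw [hv]

/-- Every complex eigenvalue of `Z = ω_f M H + ω_f c̃ h₁h₁ᵀ`,
with `M = k(I − α ĥ₁ĥ₁ᵀ)`, `H ≻ 0`, `k, ω_f > 0`, `c̃ ≥ 0`, `α ∈ [0,1]`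
(and `c̃ > 0` if `α = 1`), is real and strictly positive. -/
theorem stmt1 (n : ℕ) (hn : 1 ≤ n) (k ωf ctil α : ℝ)
    (hk : 0 < k) (hωf : 0 < ωf) (hctil : 0 ≤ ctil) (hα : α ∈ Set.Icc (0 : ℝ) 1)
    (hα1 : α = 1 → 0 < ctil)
    (h₁ : Fin n → ℝ) (hh₁ : h₁ ≠ 0)
    (H : Matrix (Fin n) (Fin n) ℝ) (hH : H.PosDef) :
    ∀ μ : ℂ,
      IsEig (ωf • ((k • ((1 : Matrix (Fin n) (Fin n) ℝ) -
            α • Matrix.vecMulVec ((Real.sqrt (h₁ ⬝ᵥ h₁))⁻¹ • h₁)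
              ((Real.sqrt (h₁ ⬝ᵥ h₁))⁻¹ • h₁))) * H) +
          (ωf * ctil) • Matrix.vecMulVec h₁ h₁) μ →
      μ.im = 0 ∧ 0 < μ.re := by
  intro μ hμ
  -- basic positivity of `d = ‖h₁‖²`
  have hd : 0 < h₁ ⬝ᵥ h₁ := by
    obtain ⟨i₀, hi₀⟩ := Function.ne_iff.mp hh₁
    exact Finset.sum_pos' (fun i _ => mul_self_nonneg _)
      ⟨i₀, Finset.mem_univ _, mul_self_pos.mpr (by simpa using hi₀)⟩
  set d : ℝ := h₁ ⬝ᵥ h₁ with hd_def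
  have hdne : d ≠ 0 := ne_of_gt hd
  have hs : Real.sqrt d ≠ 0 := by positivity
  have hss : Real.sqrt d * Real.sqrt d = d := Real.mul_self_sqrt hd.le
  set c₂ : ℝ := α * d⁻¹ with hc₂def
  -- rewrite the normalized dyad
  have hvv : Matrix.vecMulVec ((Real.sqrt d)⁻¹ • h₁) ((Real.sqrt d)⁻¹ • h₁)
      = d⁻¹ • Matrix.vecMulVec h₁ h₁ := by
    ext i j
    simp only [Matrix.vecMulVec_apply, Pi.smul_apply, smul_eq_mul, Matrix.smul_apply]
    rw [← hss]
    field_simp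
    rw [Real.sqrt_sq (Real.sqrt_nonneg _)]
  set Zr := ωf • ((k • ((1 : Matrix (Fin n) (Fin n) ℝ) -
      α • Matrix.vecMulVec ((Real.sqrt d)⁻¹ • h₁) ((Real.sqrt d)⁻¹ • h₁))) * H) +
      (ωf * ctil) • Matrix.vecMulVec h₁ h₁ with hZr_def
  have hZr2 : Zr = (ωf * k) • ((1 - c₂ • Matrix.vecMulVec h₁ h₁) * H) +
      (ωf * ctil) • Matrix.vecMulVec h₁ h₁ := by
    rw [hZr_def, hvv, smul_smul, Matrix.smul_mul, smul_smul]
  -- complex form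
  have hZc : Zr.map (algebraMap ℝ ℂ) =
      ((ωf * k : ℝ) : ℂ) • ((1 - ((c₂ : ℝ) : ℂ) • Matrix.vecMulVec (cv h₁) (cv h₁)) *
        H.map (algebraMap ℝ ℂ)) +
      ((ωf * ctil : ℝ) : ℂ) • Matrix.vecMulVec (cv h₁) (cv h₁) := by
    rw [hZr2]
    rw [cmap_add, cmap_smul, cmap_smul, cmap_mul, cmap_sub, cmap_smul, cmap_one, cmap_vecMulVec]
  -- eigenvector
  obtain ⟨x, hx0, hxe⟩ := exists_eigvec hμ
  obtain ⟨qH, hqH, hqHpos⟩ := qpos hH x hx0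
  have hdotc : cv h₁ ⬝ᵥ cv h₁ = ((d : ℝ) : ℂ) := by rw [cv_dot]
  -- expansion of `Z *ᵥ x`
  have hZx : Zr.map (algebraMap ℝ ℂ) *ᵥ x =
      ((ωf * k : ℝ) : ℂ) • ((H.map (algebraMap ℝ ℂ) *ᵥ x) -
        ((c₂ : ℝ) : ℂ) • ((cv h₁ ⬝ᵥ (H.map (algebraMap ℝ ℂ) *ᵥ x)) • cv h₁)) +
      ((ωf * ctil : ℝ) : ℂ) • ((cv h₁ ⬝ᵥ x) • cv h₁) := by
    rw [hZc, add_mulVec, smul_mulVec, smul_mulVec, ← mulVec_mulVec,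
      sub_mulVec, one_mulVec, smul_mulVec, vecMulVec_mulVec', vecMulVec_mulVec']
  by_cases hα1' : α = 1
  · -- case α = 1
    have hctil1 : 0 < ctil := hα1 hα1'
    have hc2 : c₂ = d⁻¹ := by rw [hc₂def, hα1', one_mul]
    by_cases hz : cv h₁ ⬝ᵥ x = 0
    · -- eigenvector orthogonal to h₁
      set u := H.map (algebraMap ℝ ℂ) *ᵥ x with hu
      set cc := cv h₁ ⬝ᵥ u with hcc
      have hdcne : ((d : ℝ) : ℂ) ≠ 0 := by exact_mod_cast hdne
      have hccsq : cc * (starRingEnd ℂ) cc = ((Complex.normSq cc : ℝ) : ℂ) := Complex.mul_conj cc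
      have heq : star u ⬝ᵥ (Zr.map (algebraMap ℝ ℂ) *ᵥ x) = μ * (qH : ℂ) := by
        rw [hu, ← symm_swap (posdef_symm hH) x, hxe, mulVec_smul, dotProduct_smul, smul_eq_mul,
          ← hu, hqH]
      set T : ℝ := (∑ i, Complex.normSq (u i)) - d⁻¹ * Complex.normSq cc with hT
      have hLHS : star u ⬝ᵥ (Zr.map (algebraMap ℝ ℂ) *ᵥ x) = ((ωf * k * T : ℝ) : ℂ) := by
        rw [hZx, hz]
        simp only [zero_smul, smul_zero, add_zero, dotProduct_smul, dotProduct_sub, smul_eq_mul]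
        rw [dot_star_self u, star_dot_cv u h₁, ← hcc, hc2, hT, hccsq]
        push_cast
        ring
      have hμT : μ * (qH : ℂ) = ((ωf * k * T : ℝ) : ℂ) := by rw [← heq, hLHS]
      have hwkey : star (u - (((d⁻¹ : ℝ) : ℂ) * cc) • cv h₁) ⬝ᵥ
          (u - (((d⁻¹ : ℝ) : ℂ) * cc) • cv h₁) = ((T : ℝ) : ℂ) := by
        rw [star_sub, star_smul, star_cv]
        simp only [sub_dotProduct, dotProduct_sub, smul_dotProduct, dotProduct_smul, smul_eq_mul]
        rw [dot_star_self u, star_dot_cv u h₁, ← hcc, hdotc, hT]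
        simp only [star_mul', Complex.star_def, Complex.conj_ofReal]
        push_cast
        field_simp
        linear_combination (-1 : ℂ) * hccsq
      have hTval : T = ∑ i, Complex.normSq ((u - (((d⁻¹ : ℝ) : ℂ) * cc) • cv h₁) i) := by
        have h' := hwkey
        rw [dot_star_self] at h'
        exact_mod_cast h'.symm
      have hTnn : 0 ≤ T := by
        rw [hTval]
        exact Finset.sum_nonneg fun i _ => Complex.normSq_nonneg _
      have hTpos : 0 < T := by
        rcases lt_or_eq_of_le hTnn with h | h
        · exact h
        · exfalso
          have hsum0 : ∑ i, Complex.normSq ((u - (((d⁻¹ : ℝ) : ℂ) * cc) • cv h₁) i) = 0 := by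
            rw [← hTval]; exact h.symm
          have hw0 : u - (((d⁻¹ : ℝ) : ℂ) * cc) • cv h₁ = 0 := sum_normSq_zero hsum0
          have hu_eq : u = (((d⁻¹ : ℝ) : ℂ) * cc) • cv h₁ := by rwa [sub_eq_zero] at hw0
          have hqH0 : (qH : ℂ) = 0 := by
            rw [← hqH, hu_eq, dotProduct_smul, star_dot_cv x h₁, hz]
            simp
          exact absurd hqH0 (by exact_mod_cast ne_of_gt hqHpos)
      exact real_ratio hμT hqHpos (by positivity)
    · -- h₁ is "detected": μ = ωf ctil d
      have heq2 : cv h₁ ⬝ᵥ (Zr.map (algebraMap ℝ ℂ) *ᵥ x) = μ * (cv h₁ ⬝ᵥ x) := by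
        rw [hxe, dotProduct_smul, smul_eq_mul]
      have hLHS2 : cv h₁ ⬝ᵥ (Zr.map (algebraMap ℝ ℂ) *ᵥ x)
          = ((ωf * ctil * d : ℝ) : ℂ) * (cv h₁ ⬝ᵥ x) := by
        have hdcne : ((d : ℝ) : ℂ) ≠ 0 := by exact_mod_cast hdne
        rw [hZx]
        simp only [dotProduct_add, dotProduct_smul, dotProduct_sub, smul_eq_mul, hdotc, hc2]
        push_cast
        field_simp
        ring
      have hμval : μ = ((ωf * ctil * d : ℝ) : ℂ) :=
        mul_right_cancel₀ hz (by rw [← heq2, hLHS2])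
      rw [hμval]
      constructor
      · simp
      · simp only [Complex.ofReal_re]
        positivity
  · -- case α < 1
    have h1α : 0 < 1 - α := by
      rcases lt_or_eq_of_le hα.2 with h | h
      · linarith
      · exact absurd h hα1'
    have h1αne : (1 : ℝ) - α ≠ 0 := ne_of_gt h1α
    have hdcne : ((d : ℝ) : ℂ) ≠ 0 := by exact_mod_cast hdne
    have hkcne : ((k : ℝ) : ℂ) ≠ 0 := by exact_mod_cast ne_of_gt hk
    have h1αcne : ((1 - α : ℝ) : ℂ) ≠ 0 := by exact_mod_cast h1αne
    set c₁ : ℝ := α / (1 - α) * d⁻¹ with hc₁def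
    have hc₁nn : 0 ≤ c₁ := mul_nonneg (div_nonneg hα.1 h1α.le) (inv_nonneg.mpr hd.le)
    set γ : ℝ := ωf * ctil / (k * (1 - α)) with hγdef
    have hγnn : 0 ≤ γ := div_nonneg (mul_nonneg hωf.le hctil) (mul_nonneg hk.le h1α.le)
    set Nc := Matrix.vecMulVec (cv h₁) (cv h₁) with hNcdef
    set Hc := H.map (algebraMap ℝ ℂ) with hHcdef
    set Wc : Matrix (Fin n) (Fin n) ℂ := ((k⁻¹ : ℝ) : ℂ) • (1 + ((c₁ : ℝ) : ℂ) • Nc) with hWcdef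
    have hNN : Nc * Nc = ((d : ℝ) : ℂ) • Nc := by
      rw [hNcdef, _root_.vecMulVec_mul_vecMulVec, hdotc]
    have hNNH : Nc * (Nc * Hc) = ((d : ℝ) : ℂ) • (Nc * Hc) := by
      rw [← Matrix.mul_assoc, hNN, Matrix.smul_mul]
    have hWZ : Wc * (Zr.map (algebraMap ℝ ℂ)) = ((ωf : ℝ) : ℂ) • Hc + ((γ : ℝ) : ℂ) • Nc := by
      rw [hZc, hWcdef]
      simp only [Matrix.mul_add, Matrix.add_mul, Matrix.smul_mul, Matrix.mul_smul,
        Matrix.one_mul, Matrix.mul_one, Matrix.sub_mul, Matrix.mul_sub, smul_smul,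
        smul_sub, smul_add, hNN, hNNH]
      have hne3 : -(α * k) + k ≠ 0 := by
        intro hcon
        exact (mul_ne_zero hk.ne' h1αne) (by linarith)
      clear_value d c₂ c₁ γ
      match_scalars <;> norm_cast
      all_goals try simp only [hc₁def, hc₂def, hγdef]
      all_goals try field_simp [hdne, h1αne, ne_of_gt hk, hne3]
      all_goals try ring
    have heq3 : star x ⬝ᵥ ((Wc * Zr.map (algebraMap ℝ ℂ)) *ᵥ x) = μ * (star x ⬝ᵥ (Wc *ᵥ x)) := by
      rw [← mulVec_mulVec, hxe, mulVec_smul, dotProduct_smul, smul_eq_mul]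
    have hNx : star x ⬝ᵥ (Nc *ᵥ x) = ((Complex.normSq (cv h₁ ⬝ᵥ x) : ℝ) : ℂ) := by
      rw [hNcdef, vecMulVec_mulVec', dotProduct_smul, star_dot_cv x h₁, smul_eq_mul]
      exact Complex.mul_conj _
    have hLHS3 : star x ⬝ᵥ ((Wc * Zr.map (algebraMap ℝ ℂ)) *ᵥ x)
        = ((ωf * qH + γ * Complex.normSq (cv h₁ ⬝ᵥ x) : ℝ) : ℂ) := by
      rw [hWZ, add_mulVec, smul_mulVec, smul_mulVec, dotProduct_add,
        dotProduct_smul, dotProduct_smul, hqH, hNx]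
      push_cast
      simp only [smul_eq_mul]
    have hRHS3 : star x ⬝ᵥ (Wc *ᵥ x)
        = ((k⁻¹ * ((∑ i, Complex.normSq (x i)) + c₁ * Complex.normSq (cv h₁ ⬝ᵥ x)) : ℝ) : ℂ) := by
      rw [hWcdef, smul_mulVec, add_mulVec, one_mulVec, smul_mulVec,
        dotProduct_smul, dotProduct_add, dotProduct_smul, dot_star_self x, hNx]
      push_cast
      simp only [smul_eq_mul]
      try ring
    have hSxpos : 0 < ∑ i, Complex.normSq (x i) := sum_normSq_pos hx0
    have hnsqnn : 0 ≤ Complex.normSq (cv h₁ ⬝ᵥ x) := Complex.normSq_nonneg _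
    have hfin : μ * ((k⁻¹ * ((∑ i, Complex.normSq (x i)) + c₁ * Complex.normSq (cv h₁ ⬝ᵥ x)) : ℝ) : ℂ)
        = ((ωf * qH + γ * Complex.normSq (cv h₁ ⬝ᵥ x) : ℝ) : ℂ) := by
      rw [← hRHS3, ← heq3, hLHS3]
    refine real_ratio hfin ?_ ?_
    · exact mul_pos (inv_pos.mpr hk)
        (add_pos_of_pos_of_nonneg hSxpos (mul_nonneg hc₁nn hnsqnn))
    · exact add_pos_of_pos_of_nonneg (mul_pos hωf hqHpos) (mul_nonneg hγnn hnsqnn)
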